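/- arXiv:2109.07459 — 4 statements merged into one kernel-verified Lean document; each statement's English description precedes it below -/
import Mathlib

section
/- Let e ~ Exp(λ_e), d ~ Exp(λ_d) be independent, γ ≥ 0, and define w(t) = max{t, γ}. Then E[w(max{e,d})] = γ(1−e^{−λ_d γ})(1−e^{−λ_e γ}) + ((λ_d γ+1)/λ_d) e^{−λ_d γ}(1−e^{−λ_e γ}) + ((λ_e γ+1)/λ_e) e^{−λ_e γ}(1−e^{−λ_d γ}) + (λ_d[λ_e(λ_e+λ_d)γ + 2λ_e + λ_d]/(λ_e(λ_e+λ_d)²)) e^{−(λ_e+λ_d)γ} + (λ_e[λ_d(λ_e+λ_d)γ + 2λ_d + λ_e]/(λ_d(λ_e+λ_d)²)) e^{−(λ_e+λ_d)γ}. -/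
open MeasureTheory Real Set Filter

-- derivative helper
private lemma hasDerivAt_exp_neg (lam x : ℝ) :
    HasDerivAt (fun x : ℝ => exp (-lam * x)) (-lam * exp (-lam * x)) x := by
  have h : HasDerivAt (fun x : ℝ => -lam * x) (-lam) x := by
    simpa using (hasDerivAt_id x).const_mul (-lam)
  simpa [mul_comm] using h.exp

private lemma tendsto_exp_neg (lam : ℝ) (hl : 0 < lam) :
    Tendsto (fun x : ℝ => exp (-lam * x)) atTop (nhds 0) := by
  have h : Tendsto (fun x : ℝ => lam * x) atTop atTop :=
    Tendsto.const_mul_atTop hl tendsto_id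
  have h2 := tendsto_exp_neg_atTop_nhds_zero.comp h
  exact h2.congr fun x => by simp [Function.comp, neg_mul]

private lemma tendsto_mul_exp_neg (lam : ℝ) (hl : 0 < lam) :
    Tendsto (fun x : ℝ => (x + 1 / lam) * exp (-lam * x)) atTop (nhds 0) := by
  have h1 : Tendsto (fun x : ℝ => lam * x) atTop atTop :=
    Tendsto.const_mul_atTop hl tendsto_id
  have h2 : Tendsto (fun t : ℝ => t ^ 1 * exp (-t)) atTop (nhds 0) :=
    tendsto_pow_mul_exp_neg_atTop_nhds_zero 1
  have h3 : Tendsto (fun x : ℝ => (lam * x) * exp (-(lam * x))) atTop (nhds 0) := by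
    simpa [Function.comp_def] using h2.comp h1
  have h4 : Tendsto (fun x : ℝ => x * exp (-lam * x)) atTop (nhds 0) := by
    have := h3.const_mul (1 / lam)
    simp only [mul_zero] at this
    refine this.congr fun x => ?_
    field_simp
  have h5 := tendsto_exp_neg lam hl
  have := h4.add (h5.const_mul (1 / lam))
  simpa [add_mul, mul_comm] using this

/-- integral of the exponential density over `Ioi a`. -/
private lemma A1 (lam a : ℝ) (hl : 0 < lam) :
    IntegrableOn (fun x : ℝ => lam * exp (-lam * x)) (Ioi a) ∧
      ∫ x in Ioi a, lam * exp (-lam * x) = exp (-lam * a) := by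
  have hderiv : ∀ x ∈ Ici a, HasDerivAt (fun x : ℝ => -exp (-lam * x))
      (lam * exp (-lam * x)) x := by
    intro x _
    have := (hasDerivAt_exp_neg lam x).neg
    exact this.congr_deriv (by ring)
  have hpos : ∀ x ∈ Ioi a, 0 ≤ lam * exp (-lam * x) := fun x _ =>
    mul_nonneg hl.le (exp_pos _).le
  have htend : Tendsto (fun x : ℝ => -exp (-lam * x)) atTop (nhds 0) := by
    simpa using (tendsto_exp_neg lam hl).neg
  refine ⟨integrableOn_Ioi_deriv_of_nonneg' hderiv hpos htend, ?_⟩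
  have := integral_Ioi_of_hasDerivAt_of_nonneg' hderiv hpos htend
  simpa using this

/-- first moment piece over `Ioi a`, `a ≥ 0`. -/
private lemma A2 (lam a : ℝ) (hl : 0 < lam) (ha : 0 ≤ a) :
    IntegrableOn (fun x : ℝ => x * (lam * exp (-lam * x))) (Ioi a) ∧
      ∫ x in Ioi a, x * (lam * exp (-lam * x)) = (a + 1 / lam) * exp (-lam * a) := by
  have hderiv : ∀ x ∈ Ici a, HasDerivAt (fun x : ℝ => -((x + 1 / lam) * exp (-lam * x)))
      (x * (lam * exp (-lam * x))) x := by
    intro x _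
    have h1 : HasDerivAt (fun x : ℝ => x + 1 / lam) 1 x := (hasDerivAt_id x).add_const _
    have h2 := (h1.mul (hasDerivAt_exp_neg lam x)).neg
    exact h2.congr_deriv (by field_simp; ring)
  have hpos : ∀ x ∈ Ioi a, 0 ≤ x * (lam * exp (-lam * x)) := fun x hx =>
    mul_nonneg (le_trans ha (le_of_lt hx)) (mul_nonneg hl.le (exp_pos _).le)
  have htend : Tendsto (fun x : ℝ => -((x + 1 / lam) * exp (-lam * x))) atTop (nhds 0) := by
    simpa using (tendsto_mul_exp_neg lam hl).neg
  refine ⟨integrableOn_Ioi_deriv_of_nonneg' hderiv hpos htend, ?_⟩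
  have := integral_Ioi_of_hasDerivAt_of_nonneg' hderiv hpos htend
  simpa using this

/-- integral of density over `Ioc 0 a`. -/
private lemma B (lam a : ℝ) (ha : 0 ≤ a) :
    ∫ x in Ioc (0 : ℝ) a, lam * exp (-lam * x) = 1 - exp (-lam * a) := by
  rw [← intervalIntegral.integral_of_le ha]
  have : ∫ x in (0:ℝ)..a, lam * exp (-lam * x)
      = (-exp (-lam * a)) - (-exp (-lam * 0)) := by
    refine intervalIntegral.integral_eq_sub_of_hasDerivAt (f := fun x : ℝ => -exp (-lam * x)) (fun x _ => ?_) ?_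
    · have := (hasDerivAt_exp_neg lam x).neg
      convert this using 1
      · rfl
      ring
    · exact ((continuous_const.mul (continuous_exp.comp
        (continuous_const.mul continuous_id))).intervalIntegrable 0 a)
  rw [this]; simp only [mul_zero, neg_zero, exp_zero]; ring

/-- the inner integral: `∫ max a y · lam e^{-lam y}` over `Ioi 0`. -/
private lemma lemA (lam a : ℝ) (hl : 0 < lam) (ha : 0 ≤ a) :
    ∫ y in Ioi (0 : ℝ), max a y * (lam * exp (-lam * y))
      = a + exp (-lam * a) / lam := by
  have hsplit : Ioc (0:ℝ) a ∪ Ioi a = Ioi 0 := Ioc_union_Ioi_eq_Ioi ha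
  have hint1 : IntegrableOn (fun y : ℝ => max a y * (lam * exp (-lam * y))) (Ioc 0 a) :=
    Continuous.integrableOn_Ioc
      ((continuous_const.max continuous_id).mul (continuous_const.mul
        (continuous_exp.comp (continuous_const.mul continuous_id))))
  have hint2 : IntegrableOn (fun y : ℝ => max a y * (lam * exp (-lam * y))) (Ioi a) := by
    refine ((A2 lam a hl ha).1).congr_fun (fun y hy => ?_) measurableSet_Ioi
    rw [max_eq_right (le_of_lt hy)]
  rw [← hsplit, setIntegral_union Ioc_disjoint_Ioi_same measurableSet_Ioi hint1 hint2]
  have e1 : ∫ y in Ioc (0:ℝ) a, max a y * (lam * exp (-lam * y))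
      = a * (1 - exp (-lam * a)) := by
    rw [setIntegral_congr_fun measurableSet_Ioc
      (fun y hy => by rw [max_eq_left hy.2] : EqOn _ (fun y : ℝ => a * (lam * exp (-lam * y))) _)]
    rw [integral_const_mul, B lam a ha]
  have e2 : ∫ y in Ioi a, max a y * (lam * exp (-lam * y))
      = (a + 1 / lam) * exp (-lam * a) := by
    rw [setIntegral_congr_fun measurableSet_Ioi
      (fun y hy => by rw [max_eq_right (le_of_lt hy)] :
        EqOn _ (fun y : ℝ => y * (lam * exp (-lam * y))) _)]
    exact (A2 lam a hl ha).2
  rw [e1, e2]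
  field_simp
  ring

private lemma lemC (lam c γ : ℝ) (hl : 0 < lam) (hc : 0 < c) (hγ : 0 ≤ γ) :
    ∫ x in Ioi (0 : ℝ), exp (-c * max γ x) * (lam * exp (-lam * x))
      = exp (-c * γ) * (1 - exp (-lam * γ)) + lam / (lam + c) * exp (-(lam + c) * γ) := by
  have hlc : (0:ℝ) < lam + c := by positivity
  have hEq : EqOn (fun x : ℝ => lam / (lam + c) * ((lam + c) * exp (-(lam + c) * x)))
      (fun x : ℝ => exp (-c * max γ x) * (lam * exp (-lam * x))) (Ioi γ) := by
    intro x hx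
    simp only
    rw [max_eq_right (le_of_lt hx)]
    have hprod : exp (-(lam + c) * x) = exp (-c * x) * exp (-lam * x) := by
      rw [← exp_add]; ring_nf
    rw [hprod]
    field_simp
  have hsplit : Ioc (0:ℝ) γ ∪ Ioi γ = Ioi 0 := Ioc_union_Ioi_eq_Ioi hγ
  have hint1 : IntegrableOn (fun x : ℝ => exp (-c * max γ x) * (lam * exp (-lam * x)))
      (Ioc 0 γ) :=
    Continuous.integrableOn_Ioc
      ((continuous_exp.comp (continuous_const.mul (continuous_const.max continuous_id))).mul
        (continuous_const.mul (continuous_exp.comp (continuous_const.mul continuous_id))))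
  have h0 : IntegrableOn (fun x : ℝ => lam / (lam + c) * ((lam + c) * exp (-(lam + c) * x)))
      (Ioi γ) := ((A1 (lam + c) γ hlc).1).const_mul (lam / (lam + c))
  have hint2 : IntegrableOn (fun x : ℝ => exp (-c * max γ x) * (lam * exp (-lam * x)))
      (Ioi γ) := h0.congr_fun hEq measurableSet_Ioi
  rw [← hsplit, setIntegral_union Ioc_disjoint_Ioi_same measurableSet_Ioi hint1 hint2]
  have e1 : ∫ x in Ioc (0:ℝ) γ, exp (-c * max γ x) * (lam * exp (-lam * x))
      = exp (-c * γ) * (1 - exp (-lam * γ)) := by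
    rw [setIntegral_congr_fun measurableSet_Ioc
      (fun x hx => by dsimp only; rw [max_eq_left hx.2] :
        EqOn _ (fun x : ℝ => exp (-c * γ) * (lam * exp (-lam * x))) _)]
    rw [integral_const_mul, B lam γ hγ]
  have e2 : ∫ x in Ioi γ, exp (-c * max γ x) * (lam * exp (-lam * x))
      = lam / (lam + c) * exp (-(lam + c) * γ) := by
    rw [setIntegral_congr_fun measurableSet_Ioi hEq.symm]
    rw [integral_const_mul, (A1 (lam + c) γ hlc).2]
  rw [e1, e2]

private lemma intA (lam γ : ℝ) (hl : 0 < lam) (hγ : 0 ≤ γ) :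
    IntegrableOn (fun x : ℝ => max γ x * (lam * exp (-lam * x))) (Ioi (0:ℝ)) := by
  have h1 : IntegrableOn (fun x : ℝ => max γ x * (lam * exp (-lam * x))) (Ioc 0 γ) :=
    Continuous.integrableOn_Ioc
      ((continuous_const.max continuous_id).mul (continuous_const.mul
        (continuous_exp.comp (continuous_const.mul continuous_id))))
  have h2 : IntegrableOn (fun x : ℝ => max γ x * (lam * exp (-lam * x))) (Ioi γ) :=
    ((A2 lam γ hl hγ).1).congr_fun
      (fun x hx => by rw [max_eq_right (le_of_lt hx)]) measurableSet_Ioi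
  have := h1.union h2
  rwa [Ioc_union_Ioi_eq_Ioi hγ] at this

private lemma intC (lam c γ : ℝ) (hl : 0 < lam) (hc : 0 < c) (hγ : 0 ≤ γ) :
    IntegrableOn (fun x : ℝ => exp (-c * max γ x) * (lam * exp (-lam * x))) (Ioi (0:ℝ)) := by
  have hlc : (0:ℝ) < lam + c := by positivity
  have h1 : IntegrableOn (fun x : ℝ => exp (-c * max γ x) * (lam * exp (-lam * x))) (Ioc 0 γ) :=
    Continuous.integrableOn_Ioc
      ((continuous_exp.comp (continuous_const.mul (continuous_const.max continuous_id))).mul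
        (continuous_const.mul (continuous_exp.comp (continuous_const.mul continuous_id))))
  have h0 : IntegrableOn (fun x : ℝ => lam / (lam + c) * ((lam + c) * exp (-(lam + c) * x)))
      (Ioi γ) := ((A1 (lam + c) γ hlc).1).const_mul (lam / (lam + c))
  have h2 : IntegrableOn (fun x : ℝ => exp (-c * max γ x) * (lam * exp (-lam * x))) (Ioi γ) := by
    refine h0.congr_fun (fun x hx => ?_) measurableSet_Ioi
    dsimp only
    rw [max_eq_right (le_of_lt hx)]
    have hprod : exp (-(lam + c) * x) = exp (-c * x) * exp (-lam * x) := by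
      rw [← exp_add]; ring_nf
    rw [hprod]
    field_simp
  have := h1.union h2
  rwa [Ioc_union_Ioi_eq_Ioi hγ] at this

/-- First moment of the γ-threshold waiting time `w(max{e,d}) = max{e,d,γ}`
for independent `e ~ Exp(λe)`, `d ~ Exp(λd)`. -/
theorem stmt_5 (lamE lamD : ℝ) (hE : 0 < lamE) (hD : 0 < lamD)
    (γ : ℝ) (hγ : 0 ≤ γ) :
    (∫ x in Set.Ioi (0 : ℝ), ∫ y in Set.Ioi (0 : ℝ),
        max (max x y) γ * (lamE * exp (-lamE * x) * (lamD * exp (-lamD * y))))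
      = γ * (1 - exp (-lamD * γ)) * (1 - exp (-lamE * γ))
        + (lamD * γ + 1) / lamD * exp (-lamD * γ) * (1 - exp (-lamE * γ))
        + (lamE * γ + 1) / lamE * exp (-lamE * γ) * (1 - exp (-lamD * γ))
        + lamD * (lamE * (lamE + lamD) * γ + 2 * lamE + lamD)
            / (lamE * (lamE + lamD) ^ 2) * exp (-(lamE + lamD) * γ)
        + lamE * (lamD * (lamE + lamD) * γ + 2 * lamD + lamE)
            / (lamD * (lamE + lamD) ^ 2) * exp (-(lamE + lamD) * γ) := by
  have key : EqOn
      (fun x : ℝ => ∫ y in Ioi (0 : ℝ),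
        max (max x y) γ * (lamE * exp (-lamE * x) * (lamD * exp (-lamD * y))))
      (fun x : ℝ => max γ x * (lamE * exp (-lamE * x))
        + 1 / lamD * (exp (-lamD * max γ x) * (lamE * exp (-lamE * x)))) (Ioi 0) := by
    intro x _
    simp only
    have hmax0 : 0 ≤ max x γ := le_trans hγ (le_max_right _ _)
    have h1 : ∀ y : ℝ, max (max x y) γ * (lamE * exp (-lamE * x) * (lamD * exp (-lamD * y)))
        = lamE * exp (-lamE * x) * (max (max x γ) y * (lamD * exp (-lamD * y))) := by
      intro y
      rw [max_assoc, max_comm y γ, ← max_assoc]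
      ring
    calc (∫ y in Ioi (0 : ℝ),
            max (max x y) γ * (lamE * exp (-lamE * x) * (lamD * exp (-lamD * y))))
        = ∫ y in Ioi (0 : ℝ),
            lamE * exp (-lamE * x) * (max (max x γ) y * (lamD * exp (-lamD * y))) := by
          exact setIntegral_congr_fun measurableSet_Ioi fun y _ => h1 y
      _ = lamE * exp (-lamE * x)
            * ∫ y in Ioi (0 : ℝ), max (max x γ) y * (lamD * exp (-lamD * y)) :=
          integral_const_mul _ _
      _ = lamE * exp (-lamE * x) * (max x γ + exp (-lamD * max x γ) / lamD) := by
          rw [lemA lamD (max x γ) hD hmax0]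
      _ = max γ x * (lamE * exp (-lamE * x))
            + 1 / lamD * (exp (-lamD * max γ x) * (lamE * exp (-lamE * x))) := by
          rw [max_comm γ x]
          field_simp
  rw [setIntegral_congr_fun measurableSet_Ioi key]
  have hI1 := intA lamE γ hE hγ
  have hI2 := (intC lamE lamD γ hE hD hγ).const_mul (1 / lamD)
  rw [integral_add hI1 hI2, integral_const_mul, lemA lamE γ hE hγ,
    lemC lamE lamD γ hE hD hγ]
  have hsum : exp (-(lamE + lamD) * γ) = exp (-lamE * γ) * exp (-lamD * γ) := by
    rw [← exp_add]; ring_nf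
  rw [hsum]
  have h1 : lamE + lamD ≠ 0 := by positivity
  field_simp
  ring
end

section
/- Let e ~ Exp(λ_e), d ~ Exp(λ_d) be independent, γ ≥ 0, and w(t) = max{t, γ}. Then E[w(max{e,d})²] = γ²(1−e^{−λ_d γ})(1−e^{−λ_e γ}) + ((λ_d²γ²+2λ_d γ+2)/λ_d²) e^{−λ_d γ}(1−e^{−λ_e γ}) + ((λ_e²γ²+2λ_e γ+2)/λ_e²) e^{−λ_e γ}(1−e^{−λ_d γ}) + (λ_d(λ_e²(λ_e+λ_d)²γ² + 2λ_e(λ_e+λ_d)(2λ_e+λ_d)γ + 6λ_e² + 6λ_eλ_d + 2λ_d²)/(λ_e²(λ_e+λ_d)³)) e^{−(λ_e+λ_d)γ} + (λ_e(λ_d²(λ_e+λ_d)²γ² + 2λ_d(λ_e+λ_d)(2λ_d+λ_e)γ + 6λ_d² + 6λ_eλ_d + 2λ_e²)/(λ_d²(λ_e+λ_d)³)) e^{−(λ_e+λ_d)γ}. -/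
open MeasureTheory Real

section Aux
open Filter Set

lemma aux_tendsto (lam : ℝ) (hl : 0 < lam) (k : ℕ) :
    Tendsto (fun y : ℝ => y ^ k * exp (-(lam * y))) atTop (nhds 0) := by
  have h1 : Tendsto (fun y : ℝ => (lam * y) ^ k * exp (-(lam * y))) atTop (nhds 0) :=
    (tendsto_pow_mul_exp_neg_atTop_nhds_zero k).comp
      (tendsto_atTop_atTop_of_monotone (fun a b hab => by nlinarith)
        (fun b => ⟨b / lam + |b|, by nlinarith [abs_nonneg b, le_abs_self b, mul_div_cancel₀ b hl.ne']⟩))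
  have h2 : Tendsto (fun y : ℝ => (1 / lam ^ k) * ((lam * y) ^ k * exp (-(lam * y)))) atTop (nhds ((1/lam^k) * 0)) := h1.const_mul _
  have hne : lam ^ k ≠ 0 := pow_ne_zero k hl.ne'
  convert h2 using 2 with y
  · field_simp [mul_pow]; ring
  · ring

lemma hd0 (lam : ℝ) (hl : 0 < lam) (y : ℝ) :
    HasDerivAt (fun y : ℝ => -(1 / lam) * exp (-(lam * y))) (exp (-(lam * y))) y := by
  have h : HasDerivAt (fun y : ℝ => exp (-(lam * y))) (-lam * exp (-(lam * y))) y := by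
    have := (Real.hasDerivAt_exp (-(lam * y))).comp y (((hasDerivAt_id y).const_mul lam).neg)
    exact this.congr_deriv (by ring)
  have := h.const_mul (-(1/lam))
  refine this.congr_deriv ?_
  field_simp

lemma hd1 (lam : ℝ) (hl : 0 < lam) (y : ℝ) :
    HasDerivAt (fun y : ℝ => -(y / lam + 1 / lam ^ 2) * exp (-(lam * y))) (y * exp (-(lam * y))) y := by
  have he : HasDerivAt (fun y : ℝ => exp (-(lam * y))) (-lam * exp (-(lam * y))) y := by
    have := (Real.hasDerivAt_exp (-(lam * y))).comp y (((hasDerivAt_id y).const_mul lam).neg)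
    exact this.congr_deriv (by ring)
  have hp : HasDerivAt (fun y : ℝ => -(y / lam + 1 / lam ^ 2)) (-(1/lam)) y := by
    have := (((hasDerivAt_id y).div_const lam).add_const (1/lam^2)).neg
    exact this.congr_deriv (by ring)
  have := hp.mul he
  refine this.congr_deriv ?_
  field_simp
  ring

lemma hd2 (lam : ℝ) (hl : 0 < lam) (y : ℝ) :
    HasDerivAt (fun y : ℝ => -(y ^ 2 / lam + 2 * y / lam ^ 2 + 2 / lam ^ 3) * exp (-(lam * y)))
      (y ^ 2 * exp (-(lam * y))) y := by
  have he : HasDerivAt (fun y : ℝ => exp (-(lam * y))) (-lam * exp (-(lam * y))) y := by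
    have := (Real.hasDerivAt_exp (-(lam * y))).comp y (((hasDerivAt_id y).const_mul lam).neg)
    exact this.congr_deriv (by ring)
  have hp : HasDerivAt (fun y : ℝ => -(y ^ 2 / lam + 2 * y / lam ^ 2 + 2 / lam ^ 3))
      (-(2 * y / lam + 2 / lam ^ 2)) y := by
    have h1 : HasDerivAt (fun y : ℝ => y ^ 2 / lam) (2 * y / lam) y := by
      simpa [mul_comm] using ((hasDerivAt_pow 2 y).div_const lam)
    have h2 : HasDerivAt (fun y : ℝ => 2 * y / lam ^ 2) (2 / lam ^ 2) y := by
      simpa [mul_div_assoc] using (((hasDerivAt_id y).const_mul 2).div_const (lam ^ 2))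
    have := ((h1.add h2).add_const (2 / lam ^ 3)).neg
    exact this.congr_deriv (by ring)
  have := hp.mul he
  refine this.congr_deriv ?_
  field_simp
  ring

lemma td0 (lam : ℝ) (hl : 0 < lam) :
    Tendsto (fun y : ℝ => -(1 / lam) * exp (-(lam * y))) atTop (nhds 0) := by
  have := (aux_tendsto lam hl 0).const_mul (-(1/lam))
  convert this using 2 with y
  · ring
  · ring

lemma td1 (lam : ℝ) (hl : 0 < lam) :
    Tendsto (fun y : ℝ => -(y / lam + 1 / lam ^ 2) * exp (-(lam * y))) atTop (nhds 0) := by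
  have := (((aux_tendsto lam hl 1).const_mul (-(1/lam))).add
    ((aux_tendsto lam hl 0).const_mul (-(1/lam^2))))
  convert this using 2 with y
  · ring
  · ring

lemma td2 (lam : ℝ) (hl : 0 < lam) :
    Tendsto (fun y : ℝ => -(y ^ 2 / lam + 2 * y / lam ^ 2 + 2 / lam ^ 3) * exp (-(lam * y)))
      atTop (nhds 0) := by
  have := ((((aux_tendsto lam hl 2).const_mul (-(1/lam))).add
    ((aux_tendsto lam hl 1).const_mul (-(2/lam^2)))).add
    ((aux_tendsto lam hl 0).const_mul (-(2/lam^3))))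
  convert this using 2 with y
  · ring
  · ring

lemma E0 (lam a : ℝ) (hl : 0 < lam) :
    ∫ y in Set.Ioi a, exp (-(lam * y)) = exp (-(lam * a)) / lam := by
  rw [integral_Ioi_of_hasDerivAt_of_nonneg' (fun y _ => hd0 lam hl y)
    (fun y _ => (exp_pos _).le) (td0 lam hl)]
  field_simp
  ring

lemma I0 (lam a : ℝ) (hl : 0 < lam) :
    IntegrableOn (fun y : ℝ => exp (-(lam * y))) (Set.Ioi a) :=
  integrableOn_Ioi_deriv_of_nonneg' (fun y _ => hd0 lam hl y)
    (fun y _ => (exp_pos _).le) (td0 lam hl)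

lemma E1 (lam a : ℝ) (hl : 0 < lam) (ha : 0 ≤ a) :
    ∫ y in Set.Ioi a, y * exp (-(lam * y)) = (a / lam + 1 / lam ^ 2) * exp (-(lam * a)) := by
  rw [integral_Ioi_of_hasDerivAt_of_nonneg' (fun y _ => hd1 lam hl y)
    (fun y hy => mul_nonneg (le_trans ha (le_of_lt hy)) (exp_pos _).le) (td1 lam hl)]
  ring

lemma I1 (lam a : ℝ) (hl : 0 < lam) (ha : 0 ≤ a) :
    IntegrableOn (fun y : ℝ => y * exp (-(lam * y))) (Set.Ioi a) :=
  integrableOn_Ioi_deriv_of_nonneg' (fun y _ => hd1 lam hl y)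
    (fun y hy => mul_nonneg (le_trans ha (le_of_lt hy)) (exp_pos _).le) (td1 lam hl)

lemma E2 (lam a : ℝ) (hl : 0 < lam) :
    ∫ y in Set.Ioi a, y ^ 2 * exp (-(lam * y))
      = (a ^ 2 / lam + 2 * a / lam ^ 2 + 2 / lam ^ 3) * exp (-(lam * a)) := by
  rw [integral_Ioi_of_hasDerivAt_of_nonneg' (fun y _ => hd2 lam hl y)
    (fun y _ => mul_nonneg (sq_nonneg _) (exp_pos _).le) (td2 lam hl)]
  ring

lemma I2 (lam a : ℝ) (hl : 0 < lam) :
    IntegrableOn (fun y : ℝ => y ^ 2 * exp (-(lam * y))) (Set.Ioi a) :=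
  integrableOn_Ioi_deriv_of_nonneg' (fun y _ => hd2 lam hl y)
    (fun y _ => mul_nonneg (sq_nonneg _) (exp_pos _).le) (td2 lam hl)

lemma Eioc (lam a : ℝ) (hl : 0 < lam) (ha : 0 ≤ a) :
    ∫ y in Set.Ioc 0 a, exp (-(lam * y)) = (1 - exp (-(lam * a))) / lam := by
  have hu := setIntegral_union (f := fun y : ℝ => exp (-(lam * y)))
    (Set.Ioc_disjoint_Ioi le_rfl) measurableSet_Ioi
    ((I0 lam 0 hl).mono_set Set.Ioc_subset_Ioi_self) (I0 lam a hl)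
  rw [Set.Ioc_union_Ioi_eq_Ioi ha] at hu
  rw [E0 lam 0 hl, E0 lam a hl] at hu
  have : (∫ y in Set.Ioc 0 a, exp (-(lam * y))) = exp (-(lam*0)) / lam - exp (-(lam*a)) / lam := by
    linarith
  rw [this]
  simp
  ring

lemma inner_int (lam m : ℝ) (hl : 0 < lam) (hm : 0 ≤ m) :
    ∫ y in Set.Ioi (0:ℝ), (max y m) ^ 2 * (lam * exp (-(lam * y)))
      = m ^ 2 + (2 * m / lam + 2 / lam ^ 2) * exp (-(lam * m)) := by
  have hI1 : IntegrableOn (fun y : ℝ => (max y m) ^ 2 * (lam * exp (-(lam * y)))) (Set.Ioc 0 m) := by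
    apply Continuous.integrableOn_Ioc
    exact ((continuous_id.max continuous_const).pow 2).mul
      (continuous_const.mul ((continuous_const.mul continuous_id).neg.rexp))
  have hI2 : IntegrableOn (fun y : ℝ => (max y m) ^ 2 * (lam * exp (-(lam * y)))) (Set.Ioi m) := by
    apply MeasureTheory.IntegrableOn.congr_fun ((I2 lam m hl).const_mul lam) _ measurableSet_Ioi
    intro y hy
    dsimp only
    rw [max_eq_left (le_of_lt hy)]
    ring
  rw [← Set.Ioc_union_Ioi_eq_Ioi hm,
    setIntegral_union (Set.Ioc_disjoint_Ioi le_rfl) measurableSet_Ioi hI1 hI2]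
  have h1 : ∫ y in Set.Ioc 0 m, (max y m) ^ 2 * (lam * exp (-(lam * y)))
      = m ^ 2 * (1 - exp (-(lam * m))) := by
    rw [setIntegral_congr_fun measurableSet_Ioc
      (g := fun y : ℝ => (m ^ 2 * lam) * exp (-(lam * y)))
      (fun y hy => by rw [max_eq_right hy.2]; ring)]
    rw [MeasureTheory.integral_const_mul, Eioc lam m hl hm]
    field_simp
  have h2 : ∫ y in Set.Ioi m, (max y m) ^ 2 * (lam * exp (-(lam * y)))
      = (m ^ 2 + 2 * m / lam + 2 / lam ^ 2) * exp (-(lam * m)) := by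
    rw [setIntegral_congr_fun measurableSet_Ioi
      (g := fun y : ℝ => lam * (y ^ 2 * exp (-(lam * y))))
      (fun y hy => by rw [max_eq_left (le_of_lt hy)]; ring)]
    rw [MeasureTheory.integral_const_mul, E2 lam m hl]
    field_simp
  rw [h1, h2]
  ring

end Aux

/-- Second moment of the γ-threshold waiting time `w(max{e,d}) = max{e,d,γ}`
for independent `e ~ Exp(λe)`, `d ~ Exp(λd)`. -/
theorem stmt_6 (lamE lamD : ℝ) (hE : 0 < lamE) (hD : 0 < lamD)
    (γ : ℝ) (hγ : 0 ≤ γ) :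
    (∫ x in Set.Ioi (0 : ℝ), ∫ y in Set.Ioi (0 : ℝ),
        (max (max x y) γ) ^ 2 * (lamE * exp (-lamE * x) * (lamD * exp (-lamD * y))))
      = γ ^ 2 * (1 - exp (-lamD * γ)) * (1 - exp (-lamE * γ))
        + (lamD ^ 2 * γ ^ 2 + 2 * lamD * γ + 2) / lamD ^ 2
            * exp (-lamD * γ) * (1 - exp (-lamE * γ))
        + (lamE ^ 2 * γ ^ 2 + 2 * lamE * γ + 2) / lamE ^ 2
            * exp (-lamE * γ) * (1 - exp (-lamD * γ))
        + lamD * (lamE ^ 2 * (lamE + lamD) ^ 2 * γ ^ 2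
              + 2 * lamE * (lamE + lamD) * (2 * lamE + lamD) * γ
              + 6 * lamE ^ 2 + 6 * lamE * lamD + 2 * lamD ^ 2)
            / (lamE ^ 2 * (lamE + lamD) ^ 3) * exp (-(lamE + lamD) * γ)
        + lamE * (lamD ^ 2 * (lamE + lamD) ^ 2 * γ ^ 2
              + 2 * lamD * (lamE + lamD) * (2 * lamD + lamE) * γ
              + 6 * lamD ^ 2 + 6 * lamE * lamD + 2 * lamE ^ 2)
            / (lamD ^ 2 * (lamE + lamD) ^ 3) * exp (-(lamE + lamD) * γ) := by
  have hS : 0 < lamE + lamD := by linarith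
  have hstep1 : ∀ x : ℝ, (∫ y in Set.Ioi (0:ℝ),
      (max (max x y) γ) ^ 2 * (lamE * exp (-lamE * x) * (lamD * exp (-lamD * y))))
      = ((max x γ) ^ 2 + (2 * (max x γ) / lamD + 2 / lamD ^ 2) * exp (-(lamD * max x γ)))
          * (lamE * exp (-(lamE * x))) := by
    intro x
    have hpt : ∀ y : ℝ, (max (max x y) γ) ^ 2 * (lamE * exp (-lamE * x) * (lamD * exp (-lamD * y)))
        = ((max y (max x γ)) ^ 2 * (lamD * exp (-(lamD * y)))) * (lamE * exp (-(lamE * x))) := by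
      intro y
      rw [neg_mul, neg_mul, max_comm x y, max_assoc]
      ring
    simp_rw [hpt]
    rw [MeasureTheory.integral_mul_const,
      inner_int lamD (max x γ) hD (le_trans hγ (le_max_right _ _))]
  simp_rw [hstep1]
  have hJ1 : IntegrableOn (fun x : ℝ =>
      ((max x γ) ^ 2 + (2 * (max x γ) / lamD + 2 / lamD ^ 2) * exp (-(lamD * max x γ)))
        * (lamE * exp (-(lamE * x)))) (Set.Ioc 0 γ) := by
    apply Continuous.integrableOn_Ioc
    have hm : Continuous fun x : ℝ => max x γ := continuous_id.max continuous_const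
    exact (((hm.pow 2).add (((continuous_const.mul hm).div_const lamD).add
      continuous_const |>.mul ((continuous_const.mul hm).neg.rexp)))).mul
      (continuous_const.mul ((continuous_const.mul continuous_id).neg.rexp))
  have heq2 : Set.EqOn
      (fun x : ℝ => lamE * (x ^ 2 * exp (-(lamE * x)))
        + (2 * lamE / lamD) * (x * exp (-((lamE + lamD) * x)))
        + (2 * lamE / lamD ^ 2) * exp (-((lamE + lamD) * x)))
      (fun x : ℝ =>
        ((max x γ) ^ 2 + (2 * (max x γ) / lamD + 2 / lamD ^ 2) * exp (-(lamD * max x γ)))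
          * (lamE * exp (-(lamE * x)))) (Set.Ioi γ) := by
    intro x hx
    dsimp only
    rw [max_eq_left (le_of_lt hx), show -((lamE + lamD) * x) = -(lamD * x) + -(lamE * x) by ring,
      exp_add]
    ring
  have hJ2base : Integrable (fun x : ℝ => lamE * (x ^ 2 * exp (-(lamE * x)))
        + (2 * lamE / lamD) * (x * exp (-((lamE + lamD) * x)))
        + (2 * lamE / lamD ^ 2) * exp (-((lamE + lamD) * x)))
      (volume.restrict (Set.Ioi γ)) :=
    (((I2 lamE γ hE).const_mul lamE).add ((I1 (lamE + lamD) γ hS hγ).const_mul _)).add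
      ((I0 (lamE + lamD) γ hS).const_mul _)
  have hJ2 : IntegrableOn (fun x : ℝ =>
      ((max x γ) ^ 2 + (2 * (max x γ) / lamD + 2 / lamD ^ 2) * exp (-(lamD * max x γ)))
        * (lamE * exp (-(lamE * x)))) (Set.Ioi γ) :=
    MeasureTheory.IntegrableOn.congr_fun hJ2base heq2 measurableSet_Ioi
  rw [← Set.Ioc_union_Ioi_eq_Ioi hγ,
    setIntegral_union (Set.Ioc_disjoint_Ioi le_rfl) measurableSet_Ioi hJ1 hJ2]
  have h1 : ∫ x in Set.Ioc 0 γ,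
      ((max x γ) ^ 2 + (2 * (max x γ) / lamD + 2 / lamD ^ 2) * exp (-(lamD * max x γ)))
        * (lamE * exp (-(lamE * x)))
      = (γ ^ 2 + (2 * γ / lamD + 2 / lamD ^ 2) * exp (-(lamD * γ)))
          * (1 - exp (-(lamE * γ))) := by
    rw [setIntegral_congr_fun measurableSet_Ioc
      (g := fun x : ℝ => ((γ ^ 2 + (2 * γ / lamD + 2 / lamD ^ 2) * exp (-(lamD * γ))) * lamE)
        * exp (-(lamE * x)))
      (fun x hx => by dsimp only; rw [max_eq_right hx.2]; ring)]
    rw [MeasureTheory.integral_const_mul, Eioc lamE γ hE hγ]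
    field_simp
  have h2 : ∫ x in Set.Ioi γ,
      ((max x γ) ^ 2 + (2 * (max x γ) / lamD + 2 / lamD ^ 2) * exp (-(lamD * max x γ)))
        * (lamE * exp (-(lamE * x)))
      = lamE * ((γ ^ 2 / lamE + 2 * γ / lamE ^ 2 + 2 / lamE ^ 3) * exp (-(lamE * γ)))
        + (2 * lamE / lamD) * ((γ / (lamE + lamD) + 1 / (lamE + lamD) ^ 2)
            * exp (-((lamE + lamD) * γ)))
        + (2 * lamE / lamD ^ 2) * (exp (-((lamE + lamD) * γ)) / (lamE + lamD)) := by
    rw [setIntegral_congr_fun measurableSet_Ioi heq2.symm]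
    have hA : Integrable (fun x : ℝ => lamE * (x ^ 2 * exp (-(lamE * x))))
        (volume.restrict (Set.Ioi γ)) := (I2 lamE γ hE).const_mul lamE
    have hB : Integrable (fun x : ℝ => 2 * lamE / lamD * (x * exp (-((lamE + lamD) * x))))
        (volume.restrict (Set.Ioi γ)) := (I1 (lamE + lamD) γ hS hγ).const_mul _
    have hC : Integrable (fun x : ℝ => 2 * lamE / lamD ^ 2 * exp (-((lamE + lamD) * x)))
        (volume.restrict (Set.Ioi γ)) := (I0 (lamE + lamD) γ hS).const_mul _
    have hAB : Integrable (fun x : ℝ => lamE * (x ^ 2 * exp (-(lamE * x)))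
        + 2 * lamE / lamD * (x * exp (-((lamE + lamD) * x))))
        (volume.restrict (Set.Ioi γ)) := hA.add hB
    rw [MeasureTheory.integral_add hAB hC, MeasureTheory.integral_add hA hB,
      MeasureTheory.integral_const_mul, MeasureTheory.integral_const_mul,
      MeasureTheory.integral_const_mul, E2 lamE γ hE, E1 (lamE + lamD) γ hS hγ, E0 (lamE + lamD) γ hS]
  rw [h1, h2]
  simp only [neg_mul]
  rw [show -((lamE + lamD) * γ) = -(lamD * γ) + -(lamE * γ) by ring, exp_add]
  field_simp
  ring
end

section
/- Define for δ ≥ 0 and γ ≥ 0 the function F(δ) = 1 − e^{−λ_d δ}(1 − e^{−λ_d[γ−δ]^+}(1 − (λ_d/(λ_e+λ_d)) e^{−λ_e max{γ,δ}})), where λ_e, λ_d > 0. Then F is a valid cumulative distribution function on [0,∞): F is monotone nondecreasing, right-continuous, F(δ) ∈ [0,1] for all δ ≥ 0, and F(δ) → 1 as δ → ∞. -/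
/-!
Writing `c = λ_d / (λ_e + λ_d) ∈ [0,1]`, the function `F` is `1 - e^{-λ_d δ} + const` for `δ ≤ γ`
and `1 - c e^{-(λ_e + λ_d) δ}` for `δ ≥ γ`; both pieces are nondecreasing and continuous, and the
second one tends to `1`. For `δ ≥ 0`, `F(δ) = 1 - a (1 - b (1 - c d))` with `a, b, d` values of
`exp` at nonpositive arguments, so nesting `x ↦ 1 - x` and products keeps `F(δ)` in `[0,1]`.
-/

open Real Filter

/-- The claimed starting-AoI distribution function under a γ-threshold policy. -/
noncomputable def aoiCDF (lamE lamD γ δ : ℝ) : ℝ :=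
  1 - exp (-lamD * δ) *
    (1 - exp (-lamD * max (γ - δ) 0) *
      (1 - lamD / (lamE + lamD) * exp (-lamE * max γ δ)))

open unitInterval in
lemma Real.exp_mem_unitInterval {x : ℝ} (hx : x ≤ 0) : exp x ∈ I :=
  ⟨(exp_pos x).le, exp_le_one_iff.2 hx⟩

section aoiCDF

variable {lamE lamD γ δ : ℝ}

lemma aoiCDF_of_le (h : δ ≤ γ) :
    aoiCDF lamE lamD γ δ = 1 - exp (-lamD * δ)
      + exp (-lamD * γ) * (1 - lamD / (lamE + lamD) * exp (-lamE * γ)) := by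
  have hexp : exp (-lamD * δ) * exp (-lamD * (γ - δ)) = exp (-lamD * γ) := by
    rw [← exp_add]; ring_nf
  rw [aoiCDF, max_eq_left (sub_nonneg.2 h), max_eq_left h]
  linear_combination (1 - lamD / (lamE + lamD) * exp (-lamE * γ)) * hexp

lemma aoiCDF_of_ge (h : γ ≤ δ) :
    aoiCDF lamE lamD γ δ = 1 - lamD / (lamE + lamD) * exp (-(lamE + lamD) * δ) := by
  have hexp : exp (-lamD * δ) * exp (-lamE * δ) = exp (-(lamE + lamD) * δ) := by
    rw [← exp_add]; ring_nf
  rw [aoiCDF, max_eq_right (sub_nonpos.2 h), max_eq_right h, mul_zero, exp_zero]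
  linear_combination -(lamD / (lamE + lamD)) * hexp

lemma continuous_aoiCDF : Continuous (aoiCDF lamE lamD γ) := by
  unfold aoiCDF; fun_prop

lemma monotone_aoiCDF (hE : 0 ≤ lamE) (hD : 0 ≤ lamD) : Monotone (aoiCDF lamE lamD γ) := by
  refine MonotoneOn.Iic_union_Ici (a := γ) (fun a ha b hb hab => ?_) (fun a ha b hb hab => ?_)
  · rw [aoiCDF_of_le ha, aoiCDF_of_le hb]
    have : exp (-lamD * b) ≤ exp (-lamD * a) := exp_le_exp.2 (by nlinarith)
    linarith
  · rw [aoiCDF_of_ge ha, aoiCDF_of_ge hb]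
    have : exp (-(lamE + lamD) * b) ≤ exp (-(lamE + lamD) * a) := exp_le_exp.2 (by nlinarith)
    have : 0 ≤ lamD / (lamE + lamD) := by positivity
    nlinarith

open unitInterval in
lemma aoiCDF_mem_unitInterval (hE : 0 ≤ lamE) (hD : 0 ≤ lamD) (hδ : 0 ≤ δ) :
    aoiCDF lamE lamD γ δ ∈ I := by
  have hc : lamD / (lamE + lamD) ∈ I := div_mem hD (by positivity) (by linarith)
  have hd : exp (-lamE * max γ δ) ∈ I :=
    exp_mem_unitInterval (by nlinarith [le_max_right γ δ])
  have hb : exp (-lamD * max (γ - δ) 0) ∈ I :=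
    exp_mem_unitInterval (by nlinarith [le_max_right (γ - δ) 0])
  have ha : exp (-lamD * δ) ∈ I := exp_mem_unitInterval (by nlinarith)
  exact Set.Icc.mem_iff_one_sub_mem.1 <| mul_mem ha <| Set.Icc.mem_iff_one_sub_mem.1 <|
    mul_mem hb <| Set.Icc.mem_iff_one_sub_mem.1 <| mul_mem hc hd

lemma tendsto_aoiCDF_atTop (hED : 0 < lamE + lamD) :
    Tendsto (aoiCDF lamE lamD γ) atTop (nhds 1) := by
  have hdecay : Tendsto (fun δ : ℝ => exp (-(lamE + lamD) * δ)) atTop (nhds 0) :=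
    tendsto_exp_atBot.comp (tendsto_id.const_mul_atTop_of_neg (neg_lt_zero.2 hED))
  have hlim := (hdecay.const_mul (lamD / (lamE + lamD))).const_sub 1
  rw [mul_zero, sub_zero] at hlim
  refine hlim.congr' ?_
  filter_upwards [eventually_ge_atTop γ] with δ h
  exact (aoiCDF_of_ge h).symm

end aoiCDF

theorem stmt_7_general (lamE lamD : ℝ) (hE : 0 < lamE) (hD : 0 < lamD)
    (γ : ℝ) :
    MonotoneOn (aoiCDF lamE lamD γ) (Set.Ici 0) ∧
    (∀ δ ∈ Set.Ici (0 : ℝ),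
      ContinuousWithinAt (aoiCDF lamE lamD γ) (Set.Ici δ) δ) ∧
    (∀ δ ∈ Set.Ici (0 : ℝ), aoiCDF lamE lamD γ δ ∈ Set.Icc (0 : ℝ) 1) ∧
    Tendsto (aoiCDF lamE lamD γ) atTop (nhds 1) :=
  ⟨(monotone_aoiCDF hE.le hD.le).monotoneOn _,
    fun _ _ => continuous_aoiCDF.continuousWithinAt,
    fun _ hδ => aoiCDF_mem_unitInterval hE.le hD.le hδ,
    tendsto_aoiCDF_atTop (add_pos hE hD)⟩

/-- `F` is a valid CDF on `[0,∞)`: monotone nondecreasing, right-continuous,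
valued in `[0,1]`, and tending to `1` at infinity. -/
theorem stmt_7 (lamE lamD : ℝ) (hE : 0 < lamE) (hD : 0 < lamD)
    (γ : ℝ) (hγ : 0 ≤ γ) :
    MonotoneOn (aoiCDF lamE lamD γ) (Set.Ici 0) ∧
    (∀ δ ∈ Set.Ici (0 : ℝ),
      ContinuousWithinAt (aoiCDF lamE lamD γ) (Set.Ici δ) δ) ∧
    (∀ δ ∈ Set.Ici (0 : ℝ), aoiCDF lamE lamD γ δ ∈ Set.Icc (0 : ℝ) 1) ∧
    Tendsto (aoiCDF lamE lamD γ) atTop (nhds 1) :=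
  stmt_7_general lamE lamD hE hD γ
end

section
/- Let λ_e, λ_d > 0, γ ≥ 0, and let Δ be a nonnegative random variable with CDF F(δ) = 1 − e^{−λ_d δ}(1 − e^{−λ_d[γ−δ]^+}(1 − (λ_d/(λ_e+λ_d)) e^{−λ_e max{γ,δ}})) for δ ≥ 0. Then E[Δ] = (1−e^{−λ_d γ})/λ_d − γ e^{−λ_d γ}(1 − (λ_d/(λ_e+λ_d)) e^{−λ_e γ}) + (λ_d/(λ_e+λ_d)²) e^{−(λ_e+λ_d)γ}. -/
open MeasureTheory Real

lemma aux_hasDeriv (b x : ℝ) (hb : b ≠ 0) :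
    HasDerivAt (fun t : ℝ => -exp (-b * t) / b) (exp (-b * x)) x := by
  have h := (((hasDerivAt_id x).const_mul (-b)).exp).neg.div_const b
  refine h.congr_deriv ?_
  field_simp
  simp

lemma aux_exp_Ioi (a b : ℝ) (hb : 0 < b) :
    ∫ x in Set.Ioi a, exp (-b * x) = exp (-b * a) / b := by
  have h := integral_Ioi_of_hasDerivAt_of_tendsto'
      (f := fun t : ℝ => -exp (-b * t) / b) (f' := fun t => exp (-b * t)) (a := a) (m := 0)
      (fun x _ => aux_hasDeriv b x hb.ne') (exp_neg_integrableOn_Ioi a hb) ?_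
  · rw [h]; ring
  · have : Filter.Tendsto (fun t : ℝ => exp (-b * t)) Filter.atTop (nhds 0) :=
      tendsto_exp_atBot.comp (Filter.tendsto_id.const_mul_atTop_of_neg (by linarith))
    simpa using (this.neg.div_const b)

lemma aux_exp_interval (b γ : ℝ) (hb : 0 < b) :
    ∫ x in (0:ℝ)..γ, exp (-b * x) = (1 - exp (-b * γ)) / b := by
  rw [intervalIntegral.integral_eq_sub_of_hasDerivAt
      (f := fun t : ℝ => -exp (-b * t) / b) (fun x _ => aux_hasDeriv b x hb.ne')
      (Continuous.intervalIntegrable (by continuity) _ _)]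
  simp [neg_div, sub_div]
  ring

/-- If the nonnegative random variable `Δ` (with law `μ`) has CDF
`F(δ) = 1 - e^{-λd δ}(1 - e^{-λd [γ-δ]⁺}(1 - (λd/(λe+λd)) e^{-λe max{γ,δ}}))`,
then its mean equals the stated closed form. -/
theorem stmt_8 (lamE lamD : ℝ) (hE : 0 < lamE) (hD : 0 < lamD)
    (γ : ℝ) (hγ : 0 ≤ γ)
    (μ : Measure ℝ) [IsProbabilityMeasure μ]
    (hnonneg : μ (Set.Iio 0) = 0)
    (hcdf : ∀ δ : ℝ, 0 ≤ δ →
      μ (Set.Iic δ) = ENNReal.ofReal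
        (1 - exp (-lamD * δ) *
          (1 - exp (-lamD * max (γ - δ) 0) *
            (1 - lamD / (lamE + lamD) * exp (-lamE * max γ δ))))) :
    (∫ x, x ∂μ)
      = (1 - exp (-lamD * γ)) / lamD
        - γ * exp (-lamD * γ) * (1 - lamD / (lamE + lamD) * exp (-lamE * γ))
        + lamD / (lamE + lamD) ^ 2 * exp (-(lamE + lamD) * γ) := by
  have hsum : 0 < lamE + lamD := by linarith
  set c : ℝ := lamD / (lamE + lamD) with hc
  have hc0 : 0 < c := div_pos hD hsum
  have hc1 : c < 1 := (div_lt_one hsum).2 (by linarith)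
  set S : ℝ → ℝ := fun t => exp (-lamD * t) *
      (1 - exp (-lamD * max (γ - t) 0) * (1 - c * exp (-lamE * max γ t))) with hS
  -- bounds
  have hfac : ∀ t : ℝ, 0 ≤ exp (-lamD * max (γ - t) 0) * (1 - c * exp (-lamE * max γ t)) ∧
      exp (-lamD * max (γ - t) 0) * (1 - c * exp (-lamE * max γ t)) ≤ 1 := by
    intro t
    have h1 : exp (-lamD * max (γ - t) 0) ≤ 1 := by
      apply exp_le_one_iff.2
      have := le_max_right (γ - t) 0
      nlinarith [le_max_right (γ - t) (0:ℝ)]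
    have h2 : c * exp (-lamE * max γ t) ≤ c := by
      have : exp (-lamE * max γ t) ≤ 1 := by
        apply exp_le_one_iff.2
        nlinarith [le_max_left γ t]
      nlinarith
    have h3 : 0 ≤ 1 - c * exp (-lamE * max γ t) := by linarith
    have h4 : 0 ≤ c * exp (-lamE * max γ t) := by positivity
    constructor
    · positivity
    · exact mul_le_one₀ h1 h3 (by linarith)
  have hS_nonneg : ∀ t : ℝ, 0 ≤ S t := by
    intro t
    have := (hfac t).2
    have he := exp_pos (-lamD * t)
    simp only [hS]
    nlinarith
  have hS_le_one : ∀ t : ℝ, 0 ≤ t → S t ≤ 1 := by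
    intro t ht
    have h0 := (hfac t).1
    have he : exp (-lamD * t) ≤ 1 := exp_le_one_iff.2 (by nlinarith)
    have he0 := exp_pos (-lamD * t)
    simp only [hS]
    nlinarith
  have hS_cont : Continuous S := by
    apply Continuous.mul
    · continuity
    · apply Continuous.sub continuous_const
      apply Continuous.mul
      · apply Real.continuous_exp.comp
        exact continuous_const.mul ((continuous_const.sub continuous_id).max continuous_const)
      · apply Continuous.sub continuous_const
        apply Continuous.mul continuous_const
        exact Real.continuous_exp.comp (continuous_const.mul (continuous_const.max continuous_id))
  -- tail measure
  have hIoi : ∀ t : ℝ, 0 ≤ t → μ (Set.Ioi t) = ENNReal.ofReal (S t) := by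
    intro t ht
    rw [← Set.compl_Iic, measure_compl measurableSet_Iic (measure_ne_top μ _), measure_univ,
        hcdf t ht]
    have h1 : (1 : ENNReal) = ENNReal.ofReal 1 := by simp
    have h0 : (0:ℝ) ≤ 1 - exp (-lamD * t) * (1 - exp (-lamD * max (γ - t) 0) *
        (1 - c * exp (-lamE * max γ t))) := by
      have h5 := hS_le_one t ht
      simp only [hS] at h5
      linarith
    rw [h1, ← ENNReal.ofReal_sub _ h0]
    ring_nf
    simp only [hS]
    ring_nf
  -- integrability
  have hI1 : IntegrableOn S (Set.Ioc 0 γ) :=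
    (hS_cont.integrableOn_Icc).mono_set Set.Ioc_subset_Icc_self
  have hEq2 : ∀ t ∈ Set.Ioi γ, S t = c * exp (-(lamE + lamD) * t) := by
    intro t ht
    have ht' : γ < t := ht
    have h1 : max (γ - t) 0 = 0 := max_eq_right (by linarith)
    have h2 : max γ t = t := max_eq_right ht'.le
    simp only [hS, h1, h2, mul_zero, exp_zero, one_mul]
    rw [show (-(lamE + lamD) * t) = (-lamE * t) + (-lamD * t) by ring, exp_add]
    ring
  have hI2 : IntegrableOn S (Set.Ioi γ) := by
    have base : IntegrableOn (fun x => c * exp (-(lamE + lamD) * x)) (Set.Ioi γ) :=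
      (exp_neg_integrableOn_Ioi γ hsum).const_mul c
    exact base.congr_fun (fun t ht => (hEq2 t ht).symm) measurableSet_Ioi
  have hIoi0 : IntegrableOn S (Set.Ioi 0) := by
    rw [← Set.Ioc_union_Ioi_eq_Ioi hγ]
    exact hI1.union hI2
  -- layer cake
  have hμnn : 0 ≤ᵐ[μ] (fun x : ℝ => x) := by
    rw [Filter.EventuallyLE, ae_iff]
    convert hnonneg using 2
    ext x
    simp [not_le]
  rw [integral_eq_lintegral_of_nonneg_ae hμnn aestronglyMeasurable_id,
      lintegral_eq_lintegral_meas_lt μ hμnn aemeasurable_id]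
  have hcongr : ∫⁻ t in Set.Ioi (0:ℝ), μ {a : ℝ | t < a}
      = ∫⁻ t in Set.Ioi (0:ℝ), ENNReal.ofReal (S t) := by
    apply setLIntegral_congr_fun measurableSet_Ioi
    intro t ht
    show μ {a : ℝ | t < a} = ENNReal.ofReal (S t)
    rw [show {a : ℝ | t < a} = Set.Ioi t from rfl, hIoi t (le_of_lt ht)]
  rw [hcongr, ← ofReal_integral_eq_lintegral_ofReal hIoi0
      (Filter.Eventually.of_forall fun t => hS_nonneg t),
      ENNReal.toReal_ofReal (integral_nonneg fun t => hS_nonneg t)]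
  -- compute the integral
  rw [← Set.Ioc_union_Ioi_eq_Ioi hγ,
      setIntegral_union (Set.Ioc_disjoint_Ioi le_rfl) measurableSet_Ioi hI1 hI2]
  have hpart1 : ∫ t in Set.Ioc 0 γ, S t
      = (1 - exp (-lamD * γ)) / lamD
        - γ * (exp (-lamD * γ) * (1 - c * exp (-lamE * γ))) := by
    have hEq1 : ∀ t ∈ Set.Ioc (0:ℝ) γ, S t
        = exp (-lamD * t) - exp (-lamD * γ) * (1 - c * exp (-lamE * γ)) := by
      intro t ht
      have h1 : max (γ - t) 0 = γ - t := max_eq_left (by linarith [ht.2])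
      have h2 : max γ t = γ := max_eq_left ht.2
      simp only [hS, h1, h2]
      rw [show (-lamD * γ) = (-lamD * t) + (-lamD * (γ - t)) by ring, exp_add]
      ring
    rw [setIntegral_congr_fun measurableSet_Ioc hEq1, integral_sub]
    · rw [← intervalIntegral.integral_of_le hγ, aux_exp_interval lamD γ hD,
          setIntegral_const, Real.volume_real_Ioc_of_le hγ, sub_zero,
          smul_eq_mul]
    · exact (Continuous.integrableOn_Icc
        (Real.continuous_exp.comp (continuous_const.mul continuous_id))).mono_set
        Set.Ioc_subset_Icc_self
    · exact integrableOn_const measure_Ioc_lt_top.ne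
  have hpart2 : ∫ t in Set.Ioi γ, S t
      = lamD / (lamE + lamD) ^ 2 * exp (-(lamE + lamD) * γ) := by
    rw [setIntegral_congr_fun measurableSet_Ioi hEq2, integral_const_mul,
        aux_exp_Ioi γ (lamE + lamD) hsum, hc]
    field_simp
  rw [hpart1, hpart2]
  ring
end
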